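/- Let α ∈ (0,1), β > 0, φ₀ > 0, k ∈ ℕ with k ≥ 1, and c ∈ ℝ. Consider the planar system ṙ = −r(r^{k+1} − F(y)), ẏ = r^{k+1}(F(y) + r^k c) − k y (r^{k+1} − F(y)), where F(y) = −αy − (β/α)φ₀. Then (r,y) = (0,0) is an equilibrium whose Jacobian has eigenvalues −(β/α)φ₀ < 0 and −k(β/α)φ₀ < 0, hence a hyperbolic stable node; and (r,y) = (0, −β φ₀/α²) is an equilibrium whose Jacobian has eigenvalues 0 and k β φ₀/α > 0, hence is partially hyperbolic with exactly one (positive) nonzero eigenvalue. -/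

import Mathlib

/-! Both equilibria lie on the invariant line `r = 0`, where the field reduces to
`(0, k y F(y))`; so `y = 0` and the root of `F` are equilibria. For any differentiable `F`, the
Jacobian at `(0, y)` is `diag(F(y), k (F(y) + y F'(y)))`, since for `k ≥ 1` the factor `r^{k+1}`
kills every other first-order term. With `F' = -α` this gives the two diagonal Jacobians. -/

def chartField (F : ℝ → ℝ) (k : ℕ) (c : ℝ) (p : Fin 2 → ℝ) : Fin 2 → ℝ :=
  ![-(p 0) * ((p 0) ^ (k + 1) - F (p 1)),
    (p 0) ^ (k + 1) * (F (p 1) + (p 0) ^ k * c) - (k : ℝ) * p 1 * ((p 0) ^ (k + 1) - F (p 1))]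

theorem chartField_zero_left (F : ℝ → ℝ) (k : ℕ) (c y : ℝ) :
    chartField F k c ![0, y] = ![0, k * y * F y] := by
  ext i; fin_cases i <;> simp [chartField]

theorem hasFDerivAt_chartField_zero_left {F : ℝ → ℝ} {F' y : ℝ} (hF : HasDerivAt F F' y)
    {k : ℕ} (hk : 1 ≤ k) (c : ℝ) :
    HasFDerivAt (chartField F k c)
      (LinearMap.toContinuousLinearMap
        (Matrix.mulVecLin !![F y, 0; 0, k * (F y + y * F')])) ![0, y] := by
  let π : Fin 2 → (Fin 2 → ℝ) →L[ℝ] ℝ := fun i => ContinuousLinearMap.proj i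
  have hr : HasFDerivAt (fun p : Fin 2 → ℝ => p 0) (π 0) ![0, y] := hasFDerivAt_apply 0 _
  have hy : HasFDerivAt (fun p : Fin 2 → ℝ => p 1) (π 1) ![0, y] := hasFDerivAt_apply 1 _
  have hFy : HasFDerivAt (fun p : Fin 2 → ℝ => F (p 1)) (F' • π 1) ![0, y] :=
    hF.comp_hasFDerivAt_of_eq (x := ![0, y]) hy rfl
  have hrk : HasFDerivAt (fun p : Fin 2 → ℝ => p 0 ^ (k + 1)) (0 : (Fin 2 → ℝ) →L[ℝ] ℝ)
      ![0, y] := by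
    simpa [zero_pow (by omega : k ≠ 0)] using hr.pow (k + 1)
  refine hasFDerivAt_pi'' fun i => ?_
  fin_cases i
  · refine (hr.neg.mul (hrk.sub hFy)).congr_fderiv ?_
    ext v
    simp [π, dotProduct, Fin.sum_univ_two]
  · refine ((hrk.mul (hFy.add ((hr.pow k).mul_const c))).sub
      ((hy.const_mul (k : ℝ)).mul (hrk.sub hFy))).congr_fderiv ?_
    ext v
    simp [π, dotProduct, Fin.sum_univ_two]
    ring

theorem sphere_SL_chart_deltabar1_equilibria_general
    (α β φ₀ c : ℝ) (k : ℕ)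
    (hα : 0 < α) (hβ : 0 < β) (hφ₀ : 0 < φ₀) (hk : 1 ≤ k) :
    let F : ℝ → ℝ := fun y => -α * y - β / α * φ₀
    let V : (Fin 2 → ℝ) → (Fin 2 → ℝ) := fun p =>
      ![-(p 0) * ((p 0) ^ (k + 1) - F (p 1)),
        (p 0) ^ (k + 1) * (F (p 1) + (p 0) ^ k * c)
          - (k : ℝ) * p 1 * ((p 0) ^ (k + 1) - F (p 1))]
    (V ![0, 0] = 0 ∧
      HasFDerivAt V
        (LinearMap.toContinuousLinearMap
          (Matrix.mulVecLin (!![-(β / α) * φ₀, 0; 0, -(k : ℝ) * (β / α) * φ₀])))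
        ![0, 0] ∧
      -(β / α) * φ₀ < 0 ∧ -(k : ℝ) * (β / α) * φ₀ < 0) ∧
    (V ![0, -β * φ₀ / α ^ 2] = 0 ∧
      HasFDerivAt V
        (LinearMap.toContinuousLinearMap
          (Matrix.mulVecLin (!![(0 : ℝ), 0; 0, (k : ℝ) * β * φ₀ / α])))
        ![0, -β * φ₀ / α ^ 2] ∧
      0 < (k : ℝ) * β * φ₀ / α) := by
  intro F V
  change (chartField F k c ![0, 0] = 0 ∧ HasFDerivAt (chartField F k c) _ _ ∧ _) ∧
    (chartField F k c _ = 0 ∧ HasFDerivAt (chartField F k c) _ _ ∧ _)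
  have hF' (y : ℝ) : HasDerivAt F (-α) y :=
    (((hasDerivAt_id' y).const_mul (-α)).sub_const _).congr_deriv (mul_one _)
  have hF_root : F (-β * φ₀ / α ^ 2) = 0 := by
    simp only [F]; field_simp; ring
  have hrate : 0 < β / α * φ₀ := by positivity
  have hk_rate : 0 < (k : ℝ) * (β / α * φ₀) := mul_pos (by exact_mod_cast hk) hrate
  refine ⟨⟨?_, ?_, by linarith, by linarith⟩, ?_, ?_, by positivity⟩
  · simp [chartField_zero_left]
  · convert hasFDerivAt_chartField_zero_left (hF' 0) hk c using 4
    rw [show F 0 = -(β / α) * φ₀ by simp [F]]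
    ring_nf
  · rw [chartField_zero_left, hF_root]; simp
  · convert hasFDerivAt_chartField_zero_left (hF' _) hk c using 4
    rw [hF_root]
    field_simp
    ring_nf

/-- The `ρ₂ = 0` subsystem in chart `δ̄ = 1` on the sphere `S^L`:
`ṙ = −r(r^{k+1} − F(y))`, `ẏ = r^{k+1}(F(y) + r^k c) − ky(r^{k+1} − F(y))` with
`F(y) = −αy − (β/α)φ₀`. Then `q_f^L = (0,0)` is a hyperbolic stable node with Jacobian
`diag(−(β/α)φ₀, −k(β/α)φ₀)`, and `q_r^L = (0, −βφ₀/α²)` is a partially hyperbolic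
equilibrium with Jacobian `diag(0, kβφ₀/α)`, i.e. exactly one (positive) nonzero
eigenvalue. -/
theorem sphere_SL_chart_deltabar1_equilibria
    (α β φ₀ c : ℝ) (k : ℕ)
    (hα : 0 < α) (hα1 : α < 1) (hβ : 0 < β) (hφ₀ : 0 < φ₀) (hk : 1 ≤ k) :
    let F : ℝ → ℝ := fun y => -α * y - β / α * φ₀
    let V : (Fin 2 → ℝ) → (Fin 2 → ℝ) := fun p =>
      ![-(p 0) * ((p 0) ^ (k + 1) - F (p 1)),
        (p 0) ^ (k + 1) * (F (p 1) + (p 0) ^ k * c)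
          - (k : ℝ) * p 1 * ((p 0) ^ (k + 1) - F (p 1))]
    (V ![0, 0] = 0 ∧
      HasFDerivAt V
        (LinearMap.toContinuousLinearMap
          (Matrix.mulVecLin (!![-(β / α) * φ₀, 0; 0, -(k : ℝ) * (β / α) * φ₀])))
        ![0, 0] ∧
      -(β / α) * φ₀ < 0 ∧ -(k : ℝ) * (β / α) * φ₀ < 0) ∧
    (V ![0, -β * φ₀ / α ^ 2] = 0 ∧
      HasFDerivAt V
        (LinearMap.toContinuousLinearMap
          (Matrix.mulVecLin (!![(0 : ℝ), 0; 0, (k : ℝ) * β * φ₀ / α])))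
        ![0, -β * φ₀ / α ^ 2] ∧
      0 < (k : ℝ) * β * φ₀ / α) :=
  sphere_SL_chart_deltabar1_equilibria_general α β φ₀ c k hα hβ hφ₀ hk
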